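/- Let 1 ≤ j ≤ n−2 and suppose PLCP[j] is reducible, i.e. Φ[j] ≥ 1 and S[j−1] = S[Φ[j]−1]. Then PLCP[j] = PLCP[j−1] − 1. -/

import Mathlib

/-!
Since `Φ[j] = p`, the suffixes `S_p < S_j` are adjacent in the suffix array (their ranks form a
covering pair), and the sentinel makes sure `S_j` is not the smallest suffix, so that this
predecessor is genuine. Prepending the common character `c = S[j-1] = S[p-1]` preserves adjacency:
a suffix strictly between `c·S_p` and `c·S_j` must itself start with `c`, and dropping that `c`
yields a suffix strictly between `S_p` and `S_j`. Hence `Φ[j-1] = p-1`, and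
`PLCP[j-1] = lcp(c·S_j, c·S_p) = PLCP[j] + 1`.
-/

/-- Length of the longest common prefix of two lists. -/
def lcpLen {α : Type*} [DecidableEq α] : List α → List α → ℕ
  | a :: u, b :: v => if a = b then lcpLen u v + 1 else 0
  | _, _ => 0

/-- The suffix of `S` starting at position `i` (as a list). -/
def sfx {α : Type*} {n : ℕ} (S : Fin n → α) (i : ℕ) : List α :=
  (List.ofFn S).drop i
/-- The Φ-array: `Φ[j] = SUF[ISA[j] - 1]` (for `ISA[j] ≥ 1`; junk value otherwise). -/
def phiOf {n : ℕ} (SUF : Equiv.Perm (Fin n)) (j : Fin n) : Fin n :=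
  SUF ⟨(SUF.symm j : ℕ) - 1, lt_of_le_of_lt (Nat.sub_le _ _) (Fin.isLt _)⟩

/-- The permuted LCP-array: `PLCP[j] = lcp(S_j, S_{Φ[j]})`. -/
def plcpOf {α : Type*} [DecidableEq α] {n : ℕ} (S : Fin n → α)
    (SUF : Equiv.Perm (Fin n)) (j : Fin n) : ℕ :=
  lcpLen (sfx S (j : ℕ)) (sfx S ((phiOf SUF j : Fin n) : ℕ))

namespace List

variable {α : Type*} [LinearOrder α]

lemma lt_and_lt_of_cons_lt_lt_cons {a b : α} {u v w : List α}
    (h₁ : a :: u < b :: w) (h₂ : b :: w < a :: v) : u < w ∧ w < v := by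
  rcases List.cons_lt_cons_iff.mp h₁ with hab | ⟨rfl, huw⟩
  · rcases List.cons_lt_cons_iff.mp h₂ with hba | ⟨rfl, -⟩
    · exact absurd hab hba.asymm
    · exact absurd hab (lt_irrefl b)
  · rcases List.cons_lt_cons_iff.mp h₂ with hba | ⟨-, hwv⟩
    · exact absurd hba (lt_irrefl a)
    · exact ⟨huw, hwv⟩

end List

lemma lcpLen_cons_cons_self {α : Type*} [DecidableEq α] (a : α) (u v : List α) :
    lcpLen (a :: u) (a :: v) = lcpLen u v + 1 := by
  simp [lcpLen]

section Suffix

variable {α : Type*} {n : ℕ}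

lemma sfx_eq_cons (S : Fin n → α) {k : ℕ} (hk : k < n) :
    sfx S k = S ⟨k, hk⟩ :: sfx S (k + 1) := by
  rw [sfx, List.drop_eq_getElem_cons (by simpa using hk)]
  simp [sfx]

lemma sfx_pred_eq_cons (S : Fin n → α) {k : ℕ} (hk : 1 ≤ k) (hkn : k < n) :
    sfx S (k - 1) = S ⟨k - 1, by omega⟩ :: sfx S k := by
  rw [sfx_eq_cons S (by omega), Nat.sub_add_cancel hk]

lemma sfx_eq_nil (S : Fin n → α) {k : ℕ} (hk : n ≤ k) : sfx S k = [] := by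
  simpa [sfx] using hk

lemma sfx_lt_sfx_of_apply_lt [LinearOrder α] (S : Fin n → α) {x y : Fin n}
    (h : S x < S y) : sfx S x < sfx S y := by
  rw [sfx_eq_cons S x.isLt, sfx_eq_cons S y.isLt]
  exact List.Lex.rel h

end Suffix

section Phi

variable {n : ℕ} {SUF : Equiv.Perm (Fin n)} {j p : Fin n}

lemma symm_phiOf_covBy (hj : 0 < (SUF.symm j : ℕ)) : SUF.symm (phiOf SUF j) ⋖ SUF.symm j := by
  simp only [phiOf, Equiv.symm_apply_apply, Fin.covBy_iff, Nat.covBy_iff_add_one_eq]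
  omega

lemma phiOf_eq_of_covBy (h : SUF.symm p ⋖ SUF.symm j) : phiOf SUF j = p := by
  rw [Fin.covBy_iff, Nat.covBy_iff_add_one_eq] at h
  rw [phiOf, ← SUF.apply_symm_apply p]
  congr 1
  ext
  simp only
  omega

end Phi

section SortedSuffixes

variable {α : Type*} [LinearOrder α] {n : ℕ} {S : Fin n → α} {SUF : Equiv.Perm (Fin n)}

lemma symm_lt_symm_iff_sfx_lt (hSUF : StrictMono fun i => sfx S (SUF i)) {x y : Fin n} :
    SUF.symm x < SUF.symm y ↔ sfx S x < sfx S y := by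
  simpa using (hSUF.lt_iff_lt (a := SUF.symm x) (b := SUF.symm y)).symm

lemma symm_pred_covBy_symm_pred (hSUF : StrictMono fun i => sfx S (SUF i)) {p j : Fin n}
    (hp : 1 ≤ (p : ℕ)) (hj : 1 ≤ (j : ℕ)) (hcov : SUF.symm p ⋖ SUF.symm j)
    (hc : S ⟨p - 1, by omega⟩ = S ⟨j - 1, by omega⟩) :
    SUF.symm ⟨p - 1, by omega⟩ ⋖ SUF.symm ⟨j - 1, by omega⟩ := by
  have hsp := sfx_pred_eq_cons S hp p.isLt
  have hsj := sfx_pred_eq_cons S hj j.isLt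
  refine ⟨?_, fun r hpr hrj => ?_⟩
  · rw [symm_lt_symm_iff_sfx_lt hSUF]
    simp only [hsp, hsj, hc]
    exact List.Lex.cons ((symm_lt_symm_iff_sfx_lt hSUF).mp hcov.lt)
  · obtain ⟨q, rfl⟩ := SUF.symm.surjective r
    rw [symm_lt_symm_iff_sfx_lt hSUF] at hpr hrj
    simp only [hsp, hsj, hc, sfx_eq_cons S q.isLt] at hpr hrj
    obtain ⟨hpq, hqj⟩ := List.lt_and_lt_of_cons_lt_lt_cons hpr hrj
    have hq : (q : ℕ) + 1 < n := by
      by_contra! hq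
      rw [sfx_eq_nil S hq] at hpq
      exact List.not_lt_nil _ hpq
    exact hcov.2 ((symm_lt_symm_iff_sfx_lt hSUF (y := ⟨q + 1, hq⟩)).mpr hpq)
      ((symm_lt_symm_iff_sfx_lt hSUF (x := ⟨q + 1, hq⟩)).mpr hqj)

end SortedSuffixes

/-- If `1 ≤ j ≤ n-2` and `PLCP[j]` is reducible (`Φ[j] ≥ 1` and `S[j-1] = S[Φ[j]-1]`),
then `PLCP[j] = PLCP[j-1] - 1`. -/
theorem plcp_eq_pred_sub_one_of_reducible {α : Type*} [LinearOrder α] {n : ℕ} (hn : 3 ≤ n)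
    (S : Fin n → α)
    (hsent : ∀ k : Fin n, (k : ℕ) < n - 1 → S ⟨n - 1, by omega⟩ < S k)
    (SUF : Equiv.Perm (Fin n))
    (hSUF : ∀ i j : Fin n, i < j →
      List.Lex (· < ·) (sfx S ((SUF i : Fin n) : ℕ)) (sfx S ((SUF j : Fin n) : ℕ)))
    (j : ℕ) (hj1 : 1 ≤ j) (hj2 : j ≤ n - 2)
    (hphi1 : 1 ≤ ((phiOf SUF ⟨j, by omega⟩ : Fin n) : ℕ))
    (hred : S ⟨j - 1, by omega⟩ =
      S ⟨((phiOf SUF ⟨j, by omega⟩ : Fin n) : ℕ) - 1,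
         lt_of_le_of_lt (Nat.sub_le _ _) (Fin.isLt _)⟩) :
    ((plcpOf S SUF ⟨j, by omega⟩ : ℕ) : ℤ) =
      ((plcpOf S SUF ⟨j - 1, by omega⟩ : ℕ) : ℤ) - 1 := by
  -- `<` on `List α` is `List.Lex (· < ·)`, so `hSUF` is literally strict monotonicity
  have hmono : StrictMono fun i => sfx S (SUF i) := hSUF
  set p := phiOf SUF ⟨j, by omega⟩
  have hj_pos : 0 < (SUF.symm ⟨j, by omega⟩ : ℕ) :=
    Nat.zero_lt_of_lt <| (symm_lt_symm_iff_sfx_lt hmono).mpr <|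
      sfx_lt_sfx_of_apply_lt S (hsent ⟨j, by omega⟩ (by simp only; omega))
  have hcov := symm_pred_covBy_symm_pred hmono hphi1 hj1 (symm_phiOf_covBy hj_pos) hred.symm
  have hphi_pred : phiOf SUF ⟨j - 1, by omega⟩ = ⟨p - 1, by omega⟩ := phiOf_eq_of_covBy hcov
  have hplcp : plcpOf S SUF ⟨j - 1, by omega⟩ = plcpOf S SUF ⟨j, by omega⟩ + 1 := by
    rw [plcpOf, plcpOf, hphi_pred, sfx_pred_eq_cons S hj1 (by omega), sfx_pred_eq_cons S hphi1 p.isLt, hred,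
      lcpLen_cons_cons_self]
  rw [hplcp]
  push_cast
  ring
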